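/- arXiv:1807.06914 — 2 statements merged into one kernel-verified Lean document; each statement's English description precedes it below -/
import Mathlib

section
/- The corona H ∘ K₁ of a graph H (obtained by attaching a pendant vertex to every vertex of H) has two disjoint maximum independent sets if and only if H is bipartite. -/
open SimpleGraph

variable {V : Type*} [Fintype V] [DecidableEq V]

/-- A set of vertices is independent: no two of its vertices are adjacent. -/
def isIndep (G : SimpleGraph V) (S : Finset V) : Prop :=
  ∀ ⦃a⦄, a ∈ S → ∀ ⦃b⦄, b ∈ S → ¬ G.Adj a b

/-- The independence number `α(G)`. -/
noncomputable def indepNum (G : SimpleGraph V) : ℕ :=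
  sSup {n | ∃ S : Finset V, isIndep G S ∧ S.card = n}

/-- A maximum independent set: an independent set of size `α(G)`. -/
def isMaxIndep (G : SimpleGraph V) (S : Finset V) : Prop :=
  isIndep G S ∧ S.card = _root_.indepNum G

/-- `G` has two disjoint maximum independent sets. -/
def hasTwoDisjointMaxIndep (G : SimpleGraph V) : Prop :=
  ∃ S₁ S₂ : Finset V, isMaxIndep G S₁ ∧ isMaxIndep G S₂ ∧ Disjoint S₁ S₂

/-- A matching: a set of edges of `G`, pairwise sharing no vertex. -/
def isMatchingF (G : SimpleGraph V) (M : Finset (Sym2 V)) : Prop :=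
  (∀ e ∈ M, e ∈ G.edgeSet) ∧
  (∀ e ∈ M, ∀ f ∈ M, e ≠ f → ∀ v : V, v ∈ e → v ∉ f)

/-- The matching number `μ(G)`. -/
noncomputable def matchNum (G : SimpleGraph V) : ℕ :=
  sSup {n | ∃ M : Finset (Sym2 V), isMatchingF G M ∧ M.card = n}

/-- A shedding vertex: for every independent set `S` of `G − N[v]` there is a
neighbor `u` of `v` with `S ∪ {u}` independent. -/
def IsShedding (G : SimpleGraph V) (v : V) : Prop :=
  ∀ S : Finset V, isIndep G S → (∀ w ∈ S, w ≠ v ∧ ¬ G.Adj v w) →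
    ∃ u, G.Adj v u ∧ isIndep G (insert u S)

/-- A perfect matching of `G`: a matching covering every vertex. -/
def hasPerfectMatchingF (G : SimpleGraph V) : Prop :=
  ∃ M : Finset (Sym2 V), isMatchingF G M ∧ ∀ v : V, ∃ e ∈ M, v ∈ e

/-- The disjoint union of `k` copies of `K₂`. -/
def copiesK2 (k : ℕ) : SimpleGraph (Fin k × Fin 2) :=
  SimpleGraph.fromRel (fun p q => p.1 = q.1)

/-- The corona `H ∘ K₁`: attach a pendant vertex to each vertex of `H`. -/
def corona (H : SimpleGraph V) : SimpleGraph (V ⊕ V) :=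
  SimpleGraph.fromRel (fun a b =>
    match a, b with
    | Sum.inl u, Sum.inl w => H.Adj u w
    | Sum.inl u, Sum.inr w => u = w
    | _, _ => False)

/-!
An independent set of `H ∘ K₁` meets each edge `{v, v'}` at most once, so `α(H ∘ K₁) = |V(H)|`
and the maximum independent sets are exactly `A ∪ {v' | v ∉ A}` with `A` independent in `H`.
The sets coming from `A` and `B` are disjoint iff `B = V(H) ∖ A`, so two disjoint ones exist iff
`V(H)` splits into two independent sets, i.e. iff `H` is bipartite.
-/

open Finset

section

-- A fresh vertex type, so that the ambient `[Fintype V] [DecidableEq V]` are not included.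
variable {W : Type*}

theorem isIndep.mono {G : SimpleGraph W} {S T : Finset W} (hT : isIndep G T) (hST : S ⊆ T) :
    isIndep G S :=
  fun _ ha _ hb => hT (hST ha) (hST hb)

variable (H : SimpleGraph W) {u w : W}

@[simp] lemma corona_adj_inl_inl : (corona H).Adj (.inl u) (.inl w) ↔ H.Adj u w := by
  simp only [corona, fromRel_adj, ne_eq, Sum.inl.injEq, H.adj_comm w u, or_self,
    and_iff_right_iff_imp]
  exact H.ne_of_adj

@[simp] lemma corona_adj_inl_inr : (corona H).Adj (.inl u) (.inr w) ↔ u = w := by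
  simp [corona]

@[simp] lemma corona_adj_inr_inl : (corona H).Adj (.inr u) (.inl w) ↔ u = w := by
  simp [corona, eq_comm]

@[simp] lemma corona_not_adj_inr_inr : ¬ (corona H).Adj (.inr u) (.inr w) := by
  simp [corona]

variable {H} {S : Finset (W ⊕ W)}

theorem isIndep.toLeft_of_corona (hS : isIndep (corona H) S) : isIndep H S.toLeft :=
  fun _ ha _ hb hab => hS (mem_toLeft.mp ha) (mem_toLeft.mp hb) ((corona_adj_inl_inl H).mpr hab)

theorem isIndep.disjoint_toLeft_toRight_of_corona (hS : isIndep (corona H) S) :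
    Disjoint S.toLeft S.toRight :=
  disjoint_left.mpr fun _ hl hr => hS (mem_toLeft.mp hl) (mem_toRight.mp hr) (by simp)

end

section

variable {H : SimpleGraph V}

theorem isIndep_corona_disjSum_compl {A : Finset V} (hA : isIndep H A) :
    isIndep (corona H) (A.disjSum Aᶜ) := by
  rintro (u | u) hu (w | w) hw <;>
    simp only [inl_mem_disjSum, inr_mem_disjSum, mem_compl, corona_adj_inl_inl, corona_adj_inl_inr,
      corona_adj_inr_inl, corona_not_adj_inr_inr, not_false_eq_true] at hu hw ⊢
  · exact hA hu hw
  · rintro rfl; exact hw hu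
  · rintro rfl; exact hu hw

theorem isIndep.card_le_of_corona {S : Finset (V ⊕ V)} (hS : isIndep (corona H) S) :
    #S ≤ Fintype.card V := by
  rw [← card_toLeft_add_card_toRight,
    ← card_union_of_disjoint hS.disjoint_toLeft_toRight_of_corona]
  exact card_le_univ _

theorem indepNum_corona : _root_.indepNum (corona H) = Fintype.card V := by
  have hind : isIndep (corona H) ((∅ : Finset V).disjSum ∅ᶜ) :=
    isIndep_corona_disjSum_compl fun _ ha => absurd ha (notMem_empty _)
  have hbound : Fintype.card V ∈ upperBounds {n | ∃ S, isIndep (corona H) S ∧ #S = n} := by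
    rintro n ⟨S, hS, rfl⟩
    exact hS.card_le_of_corona
  exact le_antisymm (csSup_le ⟨_, _, hind, rfl⟩ hbound) (le_csSup ⟨_, hbound⟩ ⟨_, hind, by simp⟩)

theorem isMaxIndep_corona_disjSum_compl {A : Finset V} (hA : isIndep H A) :
    isMaxIndep (corona H) (A.disjSum Aᶜ) :=
  ⟨isIndep_corona_disjSum_compl hA, by rw [card_disjSum, card_add_card_compl, indepNum_corona]⟩

theorem isMaxIndep.toRight_eq_compl_toLeft_of_corona {S : Finset (V ⊕ V)}
    (hS : isMaxIndep (corona H) S) : S.toRight = S.toLeftᶜ := by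
  refine eq_of_subset_of_card_le
    (subset_compl_iff_disjoint_left.mpr hS.1.disjoint_toLeft_toRight_of_corona) ?_
  have hcard : #S.toLeft + #S.toRight = Fintype.card V := by
    rw [card_toLeft_add_card_toRight, hS.2, indepNum_corona]
  rw [card_compl]
  omega

theorem colorable_two_iff_exists_isIndep_compl :
    H.Colorable 2 ↔ ∃ A : Finset V, isIndep H A ∧ isIndep H Aᶜ := by
  constructor
  · rintro ⟨c⟩
    refine ⟨univ.filter (c · = 0), fun u hu w hw huw => ?_, fun u hu w hw huw => ?_⟩
    · simp only [mem_filter, mem_univ, true_and] at hu hw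
      exact c.valid huw (hu.trans hw.symm)
    · simp only [mem_compl, mem_filter, mem_univ, true_and] at hu hw
      exact c.valid huw (by omega)
  · rintro ⟨A, hA, hAc⟩
    refine ⟨Coloring.mk (fun u => if u ∈ A then 0 else 1) fun {u w} huw => ?_⟩
    by_cases hu : u ∈ A <;> by_cases hw : w ∈ A <;> simp [hu, hw]
    · exact hA hu hw huw
    · exact hAc (mem_compl.mpr hu) (mem_compl.mpr hw) huw

end

/-- `H ∘ K₁` has two disjoint maximum independent sets iff `H` is bipartite. -/
theorem stmt13 (H : SimpleGraph V) :
    hasTwoDisjointMaxIndep (corona H) ↔ H.Colorable 2 := by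
  rw [colorable_two_iff_exists_isIndep_compl]
  constructor
  · rintro ⟨S₁, S₂, h₁, h₂, hd⟩
    refine ⟨S₁.toLeft, h₁.1.toLeft_of_corona, h₂.1.toLeft_of_corona.mono ?_⟩
    rw [← h₁.toRight_eq_compl_toLeft_of_corona, ← compl_compl S₂.toLeft,
      ← h₂.toRight_eq_compl_toLeft_of_corona, subset_compl_iff_disjoint_right]
    exact Finset.disjoint_left.mpr fun _ h₁u h₂u =>
      Finset.disjoint_left.mp hd (mem_toRight.mp h₁u) (mem_toRight.mp h₂u)
  · rintro ⟨A, hA, hAc⟩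
    refine ⟨_, _, isMaxIndep_corona_disjSum_compl hA, isMaxIndep_corona_disjSum_compl hAc, ?_⟩
    rw [compl_compl, Finset.disjoint_left]
    rintro (u | u) <;> simp +contextual
end

section
/- A tree T has a maximum independent set consisting entirely of shedding vertices if and only if T is isomorphic to K₂. -/
open SimpleGraph

variable {V : Type*} [Fintype V] [DecidableEq V]

/-!
A shedding vertex `v` of a bipartite graph has a leaf neighbour: otherwise choose, for every
neighbour `u` of `v`, a second neighbour `f u ≠ v`; as there are no odd cycles of length 3 or 5,
the set `f (N(v))` is independent and misses `N[v]`, yet no neighbour of `v` can be added to it.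

Now let `S` be a maximum independent set of shedding vertices of a tree and `ℓ x` a leaf hanging
at `x ∈ S`. The leaves `L = ℓ(S)` form another independent set of size `α`, all of whose
neighbours lie in `S`. If every `x ∈ S` had a neighbour `y ≠ ℓ x`, then `L ∪ {y}` would be
independent of size `α + 1`. So some `x ∈ S` is itself a leaf hanging at the leaf `ℓ x`, and
the tree is `K₂`.
-/

open Finset

variable {W : Type*}

def IsLeafAt (G : SimpleGraph W) (u v : W) : Prop :=
  G.Adj u v ∧ ∀ w, G.Adj u w → w = v

section Independence

variable {G : SimpleGraph W}

lemma isIndep_singleton (a : W) : isIndep G {a} := by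
  intro x hx y hy
  rw [mem_singleton] at hx hy
  subst hx hy
  exact G.irrefl

lemma isIndep_insert [DecidableEq W] {a : W} {S : Finset W} :
    isIndep G (insert a S) ↔ isIndep G S ∧ ∀ b ∈ S, ¬ G.Adj a b := by
  refine ⟨fun h => ⟨fun x hx y hy => h (mem_insert_of_mem hx) (mem_insert_of_mem hy),
    fun b hb => h (mem_insert_self a S) (mem_insert_of_mem hb)⟩, ?_⟩
  rintro ⟨hS, ha⟩ x hx y hy
  rcases mem_insert.1 hx with rfl | hx' <;> rcases mem_insert.1 hy with rfl | hy'
  · exact G.irrefl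
  · exact ha y hy'
  · exact fun hxy => ha x hx' hxy.symm
  · exact hS hx' hy'

lemma card_le_indepNum [Fintype W] {S : Finset W} (h : isIndep G S) :
    S.card ≤ _root_.indepNum G :=
  le_csSup ⟨Fintype.card W, by rintro _ ⟨S', -, rfl⟩; exact S'.card_le_univ⟩ ⟨S, h, rfl⟩

lemma isMaxIndep.nonempty [Fintype W] [Nonempty W] {S : Finset W} (hS : isMaxIndep G S) :
    S.Nonempty := by
  inhabit W
  have := card_le_indepNum (G := G) (isIndep_singleton default)
  rw [card_singleton, ← hS.2] at this
  exact card_pos.1 this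

lemma isIndep_top_iff {S : Finset W} : isIndep ⊤ S ↔ S.card ≤ 1 := by
  simp [isIndep, card_le_one]

lemma indepNum_top [Fintype W] [Nonempty W] : _root_.indepNum (⊤ : SimpleGraph W) = 1 := by
  inhabit W
  refine le_antisymm (csSup_le ⟨0, ∅, by simp [isIndep_top_iff]⟩ ?_) ?_
  · rintro _ ⟨S, hS, rfl⟩
    exact isIndep_top_iff.1 hS
  · simpa using card_le_indepNum (G := ⊤) (isIndep_singleton default)

end Independence

section Shedding

variable [DecidableEq W] {G : SimpleGraph W}

lemma isShedding_top [Nontrivial W] (v : W) : IsShedding ⊤ v := by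
  intro S _ hS
  obtain ⟨u, hu⟩ := exists_ne v
  have hS_empty : S = ∅ := eq_empty_of_forall_notMem fun w hw => (hS w hw).2 (hS w hw).1.symm
  subst hS_empty
  exact ⟨u, hu.symm, by simp [isIndep_top_iff]⟩

lemma IsShedding.exists_isLeafAt [Fintype W] (hG : G.Colorable 2) {v : W}
    (hv : IsShedding G v) : ∃ u, IsLeafAt G u v := by
  classical
  obtain ⟨C⟩ := hG
  have color_eq : ∀ {a b c}, G.Adj a b → G.Adj b c → C a = C c := fun hab hbc => by
    have := C.valid hab; have := C.valid hbc; omega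
  by_contra! h
  have hsecond : ∀ u, G.Adj v u → ∃ w, G.Adj u w ∧ w ≠ v := fun u hvu => by
    by_contra! hu
    exact h u ⟨hvu.symm, hu⟩
  choose! f hf hfv using hsecond
  set S := (G.neighborFinset v).image f
  have hmem : ∀ {w}, w ∈ S ↔ ∃ u, G.Adj v u ∧ f u = w := by simp [S]
  have hS_indep : isIndep G S := by
    simp only [isIndep, hmem]
    rintro _ ⟨u, hvu, rfl⟩ _ ⟨u', hvu', rfl⟩ hff
    exact C.valid hvu' ((color_eq hvu (hf u hvu)).trans (color_eq hff (hf u' hvu').symm))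
  have hS_avoid : ∀ w ∈ S, w ≠ v ∧ ¬ G.Adj v w := by
    simp only [hmem]
    rintro _ ⟨u, hvu, rfl⟩
    exact ⟨hfv u hvu, fun hvf => C.valid hvf (color_eq hvu (hf u hvu))⟩
  obtain ⟨u, hvu, hind⟩ := hv S hS_indep hS_avoid
  exact (isIndep_insert.1 hind).2 (f u) (hmem.2 ⟨u, hvu, rfl⟩) (hf u hvu)

end Shedding

lemma isMaxIndep.exists_isLeafAt_isLeafAt [Fintype W] [DecidableEq W] {G : SimpleGraph W}
    {S : Finset W} (hS : isMaxIndep G S) (hne : S.Nonempty)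
    (hleaf : ∀ x ∈ S, ∃ u, IsLeafAt G u x) :
    ∃ x ∈ S, ∃ u, IsLeafAt G u x ∧ IsLeafAt G x u := by
  choose! ℓ hℓ using hleaf
  by_contra! hnot
  set L := S.image ℓ
  have hcard : L.card = S.card := card_image_of_injOn fun x hx y hy hxy =>
    ((hℓ x hx).2 y (hxy ▸ (hℓ y hy).1)).symm
  have hLS : ∀ p ∈ L, ∀ w, G.Adj p w → w ∈ S := by
    simp only [L, mem_image]
    rintro _ ⟨x, hx, rfl⟩ w hw
    exact (hℓ x hx).2 w hw ▸ hx
  have hL : isIndep G L := fun p hp q hq hpq => by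
    obtain ⟨y, hy, rfl⟩ := mem_image.1 hq
    exact hS.1 hy (hLS p hp _ hpq) (hℓ y hy).1.symm
  obtain ⟨x, hx⟩ := hne
  obtain ⟨y, hxy, hyℓ⟩ : ∃ y, G.Adj x y ∧ y ≠ ℓ x := by
    by_contra! h
    exact hnot x hx _ (hℓ x hx) ⟨(hℓ x hx).1.symm, h⟩
  have hyL : y ∉ L := fun hy => by
    obtain ⟨z, hz, rfl⟩ := mem_image.1 hy
    exact hyℓ (by rw [(hℓ z hz).2 x hxy.symm])
  have hyS : y ∉ S := fun hy => hS.1 hx hy hxy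
  have := card_le_indepNum (isIndep_insert.2 ⟨hL, fun p hp hyp => hyS (hLS p hp y hyp.symm)⟩)
  rw [card_insert_of_notMem hyL, hcard, hS.2] at this
  omega

lemma SimpleGraph.Connected.eq_top_and_card_eq_two [Fintype W] {G : SimpleGraph W}
    (hG : G.Connected) {u v : W} (huv : IsLeafAt G u v) (hvu : IsLeafAt G v u) :
    G = ⊤ ∧ Fintype.card W = 2 := by
  classical
  have hwalk : ∀ {a b} (p : G.Walk a b), (a = u ∨ a = v) → (b = u ∨ b = v) := by
    intro a b p
    induction p with
    | nil => exact id
    | cons h _ ih =>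
      rintro (rfl | rfl)
      exacts [ih (.inr (huv.2 _ h)), ih (.inl (hvu.2 _ h))]
  have hall : ∀ x, x = u ∨ x = v := fun x => hwalk (hG.preconnected u x).some (.inl rfl)
  refine ⟨?_, ?_⟩
  · ext x y
    rcases hall x with rfl | rfl <;> rcases hall y with rfl | rfl <;>
      simp [huv.1, hvu.1, huv.1.ne, huv.1.ne']
  · rw [← card_univ, ← eq_univ_of_forall (s := {u, v}) fun x => by simpa using hall x,
      card_pair huv.1.ne]

lemma nonempty_iso_top_fin_two_iff [Fintype W] {G : SimpleGraph W} :
    Nonempty (G ≃g (⊤ : SimpleGraph (Fin 2))) ↔ G = ⊤ ∧ Fintype.card W = 2 := by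
  constructor
  · rintro ⟨e⟩
    refine ⟨?_, by simpa using Fintype.card_congr e.toEquiv⟩
    ext x y
    rw [← e.map_adj_iff, top_adj, top_adj, e.injective.ne_iff]
  · rintro ⟨rfl, h⟩
    exact ⟨Iso.completeGraph (Fintype.equivFinOfCardEq h)⟩

/-- A tree has a maximum independent set consisting only of shedding vertices
iff it is isomorphic to `K₂`. -/
theorem stmt17 (T : SimpleGraph V) (hT : T.IsTree) :
    (∃ S : Finset V, isMaxIndep T S ∧ ∀ v ∈ S, IsShedding T v) ↔
      Nonempty (T ≃g (⊤ : SimpleGraph (Fin 2))) := by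
  rw [nonempty_iso_top_fin_two_iff]
  constructor
  · rintro ⟨S, hS, hshed⟩
    have : Nonempty V := hT.connected.nonempty
    obtain ⟨x, -, u, hux, hxu⟩ := hS.exists_isLeafAt_isLeafAt hS.nonempty
      fun x hx => (hshed x hx).exists_isLeafAt hT.colorable_two
    exact hT.connected.eq_top_and_card_eq_two hux hxu
  · rintro ⟨rfl, hcard⟩
    have : Nontrivial V := Fintype.one_lt_card_iff_nontrivial.1 (by omega)
    obtain ⟨v⟩ : Nonempty V := inferInstance
    exact ⟨{v}, ⟨isIndep_singleton v, by rw [card_singleton, indepNum_top]⟩,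
      fun w _ => isShedding_top w⟩
end
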